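/- Let n ≥ 1 be an integer, let p ∈ P_n, and define f(z) = z·p(z) on 𝔻 (so f/z ∈ P_n, i.e. f belongs to MacGregor's class W_n). Then for every z with 0 < |z| < ((e−1)/(√(n²(e+1)² + (e−1)²) + n(e+1)))^(1/n) one has z f′(z)/f(z) ∈ Δ_SG. -/

import Mathlib

open Complex Metric

/-- The sigmoid domain Δ_SG = {w : |Log(w/(2-w))| < 1}. -/
noncomputable def DeltaSG : Set ℂ := {w : ℂ | ‖Complex.log (w / (2 - w))‖ < 1}

/-- The Carathéodory-type class P_n(α): analytic p on 𝔻 with p(0) = 1,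
derivatives of orders 1,…,n−1 vanishing at 0, and Re p > α on 𝔻. -/
def CaraPn (n : ℕ) (α : ℝ) (p : ℂ → ℂ) : Prop :=
  DifferentiableOn ℂ p (Metric.ball 0 1) ∧ p 0 = 1 ∧
    (∀ k : ℕ, 1 ≤ k → k ≤ n - 1 → iteratedDeriv k p 0 = 0) ∧
    ∀ z ∈ Metric.ball (0 : ℂ) 1, α < (p z).re


lemma num_fact : 24 * Real.sinh 1 ≤ 19 * Real.cosh 1 := by
  rw [Real.sinh_eq, Real.cosh_eq]
  have h1 := Real.exp_one_lt_d9
  have h2 := Real.exp_one_gt_d9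
  have h3 : Real.exp (-1) = (Real.exp 1)⁻¹ := by rw [Real.exp_neg]
  have h4 : 0 < Real.exp 1 := Real.exp_pos 1
  rw [h3]
  have h5 : (Real.exp 1)⁻¹ * Real.exp 1 = 1 := inv_mul_cancel₀ (ne_of_gt h4)
  nlinarith [h5, h1, h2, h4, inv_pos.mpr h4]

lemma sinh_chord {x : ℝ} (h0 : 0 ≤ x) (h1 : x ≤ 1) : Real.sinh x ≤ x * Real.sinh 1 := by
  have hc : ConvexOn ℝ (Set.Icc (0:ℝ) 1) Real.sinh := by
    apply convexOn_of_deriv2_nonneg (convex_Icc 0 1)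
    · exact Real.continuous_sinh.continuousOn
    · exact Real.differentiable_sinh.differentiableOn
    · rw [Real.deriv_sinh]; exact Real.differentiable_cosh.differentiableOn
    · intro y hy
      have hd : deriv^[2] Real.sinh y = Real.sinh y := by
        show deriv (deriv (deriv^[0] Real.sinh)) y = _
        simp [Real.deriv_sinh, Real.deriv_cosh]
      rw [hd]
      rw [interior_Icc] at hy
      exact Real.sinh_nonneg_iff.mpr hy.1.le
  have h := hc.2 (x := (0:ℝ)) (y := (1:ℝ)) (Set.mem_Icc.2 ⟨le_refl 0, by norm_num⟩)
    (Set.mem_Icc.2 ⟨by norm_num, le_refl 1⟩) (by linarith : (0:ℝ) ≤ 1 - x) h0 (by ring)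
  simp only [smul_eq_mul, mul_zero, mul_one, zero_add, Real.sinh_zero, add_zero] at h
  linarith

/-- key: cosh 1 * cos √(1-x²) ≤ cosh x for x² ≤ 1 -/
lemma key_cosh_cos {x : ℝ} (hx : x^2 ≤ 1) :
    Real.cosh 1 * Real.cos (Real.sqrt (1 - x^2)) ≤ Real.cosh x := by
  set b : ℝ := 1 - x^2 with hbdef
  have hb0 : 0 ≤ b := by rw [hbdef]; nlinarith
  have hb1 : b ≤ 1 := by nlinarith [sq_nonneg x]
  -- cos bound
  have hsb : Real.sqrt b ≤ 1 := by
    have := Real.sqrt_le_sqrt hb1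
    rwa [Real.sqrt_one] at this
  have hcos : Real.cos (Real.sqrt b) ≤ 1 - b/2 + 5*b^2/96 := by
    have h := Real.cos_bound (x := Real.sqrt b) (by rwa [_root_.abs_of_nonneg (Real.sqrt_nonneg b)])
    have h2 : (Real.sqrt b)^2 = b := Real.sq_sqrt hb0
    rw [_root_.abs_of_nonneg (Real.sqrt_nonneg b)] at h
    have h4 : (Real.sqrt b)^4 = b^2 := by
      rw [show (4:ℕ) = 2*2 by norm_num, pow_mul, h2]
    rw [abs_le] at h
    nlinarith [h.2]
  -- define F and show monotone
  set F : ℝ → ℝ := fun b => Real.cosh (Real.sqrt (1 - b)) - Real.cosh 1 * (1 - b/2 + 5*b^2/96)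
    with hF
  have hc1 : 0 < Real.cosh 1 := Real.cosh_pos 1
  have hmono : MonotoneOn F (Set.Icc 0 1) := by
    apply monotoneOn_of_deriv_nonneg (convex_Icc 0 1)
    · apply ContinuousOn.sub
      · exact (Real.continuous_cosh.comp (Real.continuous_sqrt.comp (by continuity))).continuousOn
      · exact (Continuous.continuousOn (by continuity))
    · intro y hy
      rw [interior_Icc] at hy
      have h1b : (1 : ℝ) - y ≠ 0 := by nlinarith [hy.2]
      have hd1 : HasDerivAt (fun b : ℝ => 1 - b) (-1) y := by
        simpa using (hasDerivAt_id y).const_sub (1:ℝ)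
      have hd2 : HasDerivAt (fun b : ℝ => Real.sqrt (1 - b))
          (1 / (2 * Real.sqrt (1 - y)) * (-1)) y :=
        (Real.hasDerivAt_sqrt h1b).comp y hd1
      have hd3 : HasDerivAt (fun b : ℝ => Real.cosh (Real.sqrt (1 - b)))
          (Real.sinh (Real.sqrt (1 - y)) * (1 / (2 * Real.sqrt (1 - y)) * (-1))) y :=
        (Real.hasDerivAt_cosh _).comp y hd2
      have hd4 : HasDerivAt F
          (Real.sinh (Real.sqrt (1 - y)) * (1 / (2 * Real.sqrt (1 - y)) * (-1))
            - Real.cosh 1 * (-(1/2) + 5*(2*y)/96)) y := by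
        apply hd3.sub
        have : HasDerivAt (fun b : ℝ => 1 - b/2 + 5*b^2/96) (-(1/2) + 5*(2*y)/96) y := by
          have p1 : HasDerivAt (fun b : ℝ => 1 - b/2) (-(1/2)) y := by
            simpa using ((hasDerivAt_id y).div_const 2).const_sub 1
          have p2 : HasDerivAt (fun b : ℝ => 5*b^2/96) (5*(2*y)/96) y := by
            simpa [mul_comm] using (((hasDerivAt_pow 2 y)).const_mul 5).div_const 96
          exact p1.add p2
        exact this.const_mul _
      exact (hd4.differentiableAt).differentiableWithinAt
    · intro y hy
      rw [interior_Icc] at hy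
      have h1b : (0:ℝ) < 1 - y := by linarith [hy.2]
      have hs0 : 0 < Real.sqrt (1 - y) := Real.sqrt_pos.2 h1b
      have hs1 : Real.sqrt (1 - y) ≤ 1 := by
        have := Real.sqrt_le_sqrt (show 1 - y ≤ 1 by linarith [hy.1])
        rwa [Real.sqrt_one] at this
      have hd1 : HasDerivAt (fun b : ℝ => 1 - b) (-1) y := by
        simpa using (hasDerivAt_id y).const_sub (1:ℝ)
      have hd2 : HasDerivAt (fun b : ℝ => Real.sqrt (1 - b))
          (1 / (2 * Real.sqrt (1 - y)) * (-1)) y :=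
        (Real.hasDerivAt_sqrt (ne_of_gt h1b)).comp y hd1
      have hd3 : HasDerivAt (fun b : ℝ => Real.cosh (Real.sqrt (1 - b)))
          (Real.sinh (Real.sqrt (1 - y)) * (1 / (2 * Real.sqrt (1 - y)) * (-1))) y :=
        (Real.hasDerivAt_cosh _).comp y hd2
      have hd4 : HasDerivAt F
          (Real.sinh (Real.sqrt (1 - y)) * (1 / (2 * Real.sqrt (1 - y)) * (-1))
            - Real.cosh 1 * (-(1/2) + 5*(2*y)/96)) y := by
        apply hd3.sub
        have : HasDerivAt (fun b : ℝ => 1 - b/2 + 5*b^2/96) (-(1/2) + 5*(2*y)/96) y := by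
          have p1 : HasDerivAt (fun b : ℝ => 1 - b/2) (-(1/2)) y := by
            simpa using ((hasDerivAt_id y).div_const 2).const_sub 1
          have p2 : HasDerivAt (fun b : ℝ => 5*b^2/96) (5*(2*y)/96) y := by
            simpa [mul_comm] using (((hasDerivAt_pow 2 y)).const_mul 5).div_const 96
          exact p1.add p2
        exact this.const_mul _
      rw [hd4.deriv]
      -- bound: sinh α/(2α) ≤ sinh 1/2, and cosh1*(1/2 - 5y/48) ≥ cosh1*19/48 ≥ sinh1/2
      have hsc : Real.sinh (Real.sqrt (1 - y)) ≤ Real.sqrt (1 - y) * Real.sinh 1 :=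
        sinh_chord hs0.le hs1
      have e1 : Real.sinh (Real.sqrt (1 - y)) * (1 / (2 * Real.sqrt (1 - y)) * (-1))
          ≥ -(Real.sinh 1 / 2) := by
        rw [ge_iff_le, neg_le, ← neg_mul_comm]
        have : Real.sinh (Real.sqrt (1 - y)) * (1 / (2 * Real.sqrt (1 - y)))
            ≤ Real.sinh 1 / 2 := by
          rw [mul_one_div, div_le_div_iff₀ (by positivity) (by norm_num)]
          nlinarith [hsc, hs0]
        simpa [neg_mul, neg_neg] using this
      have e2 : Real.cosh 1 * (-(1/2) + 5*(2*y)/96) ≤ -(Real.cosh 1 * (19/48)) := by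
        nlinarith [hy.2, hc1]
      have e3 : Real.sinh 1 / 2 ≤ Real.cosh 1 * (19/48) := by nlinarith [num_fact]
      linarith
  -- conclude
  have hF0 : F 0 = 0 := by simp [hF]
  have := hmono (Set.mem_Icc.2 ⟨le_refl 0, by norm_num⟩) (Set.mem_Icc.2 ⟨hb0, hb1⟩) hb0
  rw [hF0] at this
  have hFb : 0 ≤ F b := this
  rw [hF] at hFb
  simp only [sub_nonneg] at hFb
  have hxx : Real.sqrt (1 - b) = |x| := by
    rw [hbdef]; simp [Real.sqrt_sq_eq_abs]
  have : Real.cosh 1 * (1 - b/2 + 5*b^2/96) ≤ Real.cosh x := by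
    rw [← Real.cosh_abs x, ← hxx]; exact hFb
  calc Real.cosh 1 * Real.cos (Real.sqrt (1 - x^2)) 
      ≤ Real.cosh 1 * (1 - b/2 + 5*b^2/96) := by
        apply mul_le_mul_of_nonneg_left _ hc1.le
        rw [hbdef] at hcos ⊢; exact hcos
    _ ≤ Real.cosh x := this

set_option maxHeartbeats 1000000 in
lemma mem_deltaSG (u : ℂ) (hu : Norm.norm u < (Real.exp 1 - 1) / (Real.exp 1 + 1)) :
    (1 + u) ∈ DeltaSG := by
  set E := Real.exp 1 with hE
  have hE1 : 1 < E := by rw [hE]; nlinarith [Real.exp_one_gt_d9]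
  have hEpos : (0:ℝ) < E := by linarith
  set c : ℝ := Real.cosh 1 with hc
  set s : ℝ := Real.sinh 1 with hs
  have hcs : c^2 - s^2 = 1 := by rw [hc, hs]; rw [Real.cosh_sq]; ring
  have hs2 : s^2 = c^2 - 1 := by linarith
  have hcpos : 0 < c := Real.cosh_pos 1
  have hspos : 0 < s := by rw [hs]; exact Real.sinh_pos_iff.mpr one_pos
  have hcs1 : c + s = E := by rw [hc, hs, hE, Real.cosh_add_sinh]
  have hcs2 : c - s = Real.exp (-1) := by rw [hc, hs, Real.cosh_sub_sinh]
  have hrho1 : (E - 1)/(E + 1) < 1 := by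
    rw [div_lt_one (by linarith)]; linarith
  have habs1 : Norm.norm u < 1 := lt_trans hu hrho1
  have h1u : (1 : ℂ) - u ≠ 0 := by
    intro h
    have hu1 : u = 1 := by linear_combination -h
    rw [hu1] at habs1; simp at habs1
  set v : ℂ := (1 + u) / (1 - u) with hv
  -- Step 1 : |v - c| < s
  have hkey : Norm.norm (v - (c:ℂ)) < s := by
    have hnum : v - (c:ℂ) = ((1 + u) - c * (1 - u)) / (1 - u) := by
      rw [eq_div_iff h1u, hv, sub_mul, div_mul_cancel₀ _ h1u]
    rw [hnum, norm_div, div_lt_iff₀ (by simpa using (norm_pos_iff.mpr h1u))]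
    have habs2 : Complex.normSq u < (E - 1)^2/(E + 1)^2 := by
      rw [← Complex.sq_norm, ← div_pow]
      exact pow_lt_pow_left₀ hu (norm_nonneg u) (by norm_num)
    have hq : (u.re^2 + u.im^2) * (E+1)^2 < (E-1)^2 := by
      have hns : Complex.normSq u = u.re^2 + u.im^2 := by
        rw [Complex.normSq_apply]; ring
      rw [hns] at habs2
      rw [← lt_div_iff₀ (by positivity)]
      exact habs2
    have hkeyid : (c - 1) * (E+1)^2 = (c + 1) * (E-1)^2 := by
      have h2 : c = (E + E⁻¹)/2 := by
        rw [hc, Real.cosh_eq, hE, Real.exp_neg]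
      rw [h2]
      field_simp
      ring
    have hq1 : (c + 1) * (u.re^2 + u.im^2) < c - 1 := by
      have h3 : (c+1) * ((u.re^2+u.im^2) * (E+1)^2) < (c+1) * (E-1)^2 :=
        mul_lt_mul_of_pos_left hq (by linarith)
      rw [← hkeyid] at h3
      have h4 : (c+1) * (u.re^2+u.im^2) * (E+1)^2 < (c-1) * (E+1)^2 := by
        nlinarith [h3]
      exact lt_of_mul_lt_mul_right h4 (by positivity)
    have hsq : Complex.normSq ((1 + u) - c * (1 - u)) < (s * Norm.norm (1 - u))^2 := by
      rw [mul_pow, Complex.sq_norm]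
      simp only [Complex.normSq_apply, Complex.sub_re, Complex.sub_im, Complex.add_re,
        Complex.add_im, Complex.mul_re, Complex.mul_im, Complex.one_re, Complex.one_im,
        Complex.ofReal_re, Complex.ofReal_im]
      nlinarith [hq1, hs2]
    have h2 : (0:ℝ) ≤ s * Norm.norm (1 - u) := by positivity
    have h1 : Norm.norm ((1 + u) - c * (1 - u))^2 < (s * Norm.norm (1 - u))^2 := by
      rw [Complex.sq_norm]; exact hsq
    exact lt_of_pow_lt_pow_left₀ 2 h2 h1
  -- Step 2: conclude
  have hvre : (c:ℝ) - s < v.re := by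
    have ht := Complex.abs_re_le_norm (v - (c:ℂ))
    have h2 : (v - (c:ℂ)).re = v.re - c := by simp
    rw [h2] at ht
    have ht2 := abs_lt.1 (lt_of_le_of_lt ht hkey)
    linarith [ht2.1]
  have hvrepos : 0 < v.re := by
    have : (0:ℝ) < c - s := by rw [hcs2]; exact Real.exp_pos _
    linarith
  have hvne : v ≠ 0 := by
    intro h; rw [h] at hvrepos; simp at hvrepos
  set m : ℝ := Norm.norm v with hm
  have hmpos : 0 < m := norm_pos_iff.mpr hvne
  have habsc : Norm.norm (c:ℂ) = c := by
    rw [Complex.norm_real, Real.norm_eq_abs, _root_.abs_of_pos hcpos]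
  have hmlt : m < E := by
    calc m = Norm.norm ((v - (c:ℂ)) + (c:ℂ)) := by rw [hm]; ring_nf
    _ ≤ Norm.norm (v - (c:ℂ)) + Norm.norm (c:ℂ) := norm_add_le _ _
    _ < s + c := by rw [habsc]; linarith [hkey]
    _ = E := by linarith [hcs1]
  have hmgt : Real.exp (-1) < m := by
    have h3 : Norm.norm (c:ℂ) ≤ Norm.norm (v - (c:ℂ)) + Norm.norm v := by
      calc Norm.norm (c:ℂ) = Norm.norm ((c:ℂ) - v + v) := by ring_nf
      _ ≤ Norm.norm ((c:ℂ) - v) + Norm.norm v := norm_add_le _ _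
      _ = Norm.norm (v - (c:ℂ)) + Norm.norm v := by rw [norm_sub_rev]
    rw [habsc] at h3
    rw [← hcs2]
    linarith [hkey, h3]
  set X : ℝ := Real.log m with hX
  have hX1 : X < 1 := by
    rw [hX, ← Real.log_exp 1]
    exact Real.log_lt_log hmpos hmlt
  have hX2 : -1 < X := by
    rw [hX, ← Real.log_exp (-1)]
    exact Real.log_lt_log (Real.exp_pos _) hmgt
  have hX3 : X^2 < 1 := by nlinarith
  have hcoshX : Real.cosh X = (m + m⁻¹)/2 := by
    rw [hX, Real.cosh_eq, Real.exp_log hmpos, Real.exp_neg, Real.exp_log hmpos]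
  have hre : m^2 + 1 < 2 * c * v.re := by
    have h6 : Complex.normSq (v - (c:ℂ)) < s^2 := by
      rw [← Complex.sq_norm]
      exact pow_lt_pow_left₀ hkey (norm_nonneg _) (by norm_num)
    have h7 : Complex.normSq (v - (c:ℂ)) = Complex.normSq v - 2*c*v.re + c^2 := by
      simp [Complex.normSq_apply, Complex.sub_re, Complex.sub_im]
      ring
    have h8 : Complex.normSq v = m^2 := (Complex.sq_norm v).symm
    rw [h7, h8] at h6
    nlinarith [hcs]
  have hcosarg : Real.cos v.arg = v.re / m := Complex.cos_arg hvne
  have hgt : Real.cosh X < c * Real.cos v.arg := by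
    rw [hcosarg, hcoshX, mul_div_assoc', lt_div_iff₀ hmpos]
    have hminv : m⁻¹ * m = 1 := inv_mul_cancel₀ (ne_of_gt hmpos)
    nlinarith [hre, hmpos, hcpos, hminv]
  have hkc := key_cosh_cos (le_of_lt hX3)
  have hcos2 : Real.cos (Real.sqrt (1 - X^2)) < Real.cos v.arg := by
    have h13 := lt_of_le_of_lt hkc hgt
    exact lt_of_mul_lt_mul_left h13 hcpos.le
  have hsq1 : Real.sqrt (1 - X^2) ≤ 1 := by
    have h14 := Real.sqrt_le_sqrt (show 1 - X^2 ≤ 1 by nlinarith)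
    rwa [Real.sqrt_one] at h14
  have harg : |v.arg| < Real.sqrt (1 - X^2) := by
    by_contra hcon
    push_neg at hcon
    have h9 : Real.cos |v.arg| ≤ Real.cos (Real.sqrt (1 - X^2)) := by
      apply Real.strictAntiOn_cos.antitoneOn _ _ hcon
      · exact Set.mem_Icc.2 ⟨Real.sqrt_nonneg _, by nlinarith [Real.pi_gt_three]⟩
      · exact Set.mem_Icc.2 ⟨abs_nonneg _, Complex.abs_arg_le_pi v⟩
    rw [Real.cos_abs] at h9
    linarith
  have hfinal : Norm.norm (Complex.log v) < 1 := by
    have h10 : (Norm.norm (Complex.log v))^2 = X^2 + v.arg^2 := by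
      rw [Complex.sq_norm, Complex.normSq_apply, Complex.log_re, Complex.log_im, ← hm, ← hX]
      ring
    have h12 : Real.sqrt (1 - X^2)^2 = 1 - X^2 := Real.sq_sqrt (by nlinarith)
    have h11 : v.arg^2 < 1 - X^2 := by
      nlinarith [harg, abs_nonneg v.arg, _root_.sq_abs v.arg]
    nlinarith [norm_nonneg (Complex.log v), h10, h11]
  show Norm.norm (Complex.log ((1 + u)/(2 - (1+u)))) < 1
  have h15 : (2 : ℂ) - (1 + u) = 1 - u := by ring
  rw [h15]
  exact hfinal

-- Möbius denominator nonzero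
lemma mobius_den_ne {b w : ℂ} (hb : Norm.norm b < 1) (hw : Norm.norm w < 1) :
    (1 : ℂ) + (starRingEnd ℂ) b * w ≠ 0 := by
  intro h
  have h1 : Norm.norm ((starRingEnd ℂ) b * w) < 1 := by
    rw [norm_mul, Complex.norm_conj]
    calc Norm.norm b * Norm.norm w ≤ Norm.norm b * 1 :=
      mul_le_mul_of_nonneg_left hw.le (norm_nonneg b)
    _ < 1 := by rwa [mul_one]
  have h2 : (starRingEnd ℂ) b * w = -1 := by linear_combination h
  rw [h2] at h1
  simp at h1

lemma mobius_lt_one {b w : ℂ} (hb : Norm.norm b < 1) (hw : Norm.norm w < 1) :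
    Norm.norm ((w + b) / (1 + (starRingEnd ℂ) b * w)) < 1 := by
  have hden := mobius_den_ne hb hw
  rw [norm_div, div_lt_one (norm_pos_iff.mpr hden)]
  have hb2 : Complex.normSq b < 1 := by rw [← Complex.sq_norm]; nlinarith [norm_nonneg b]
  have hw2 : Complex.normSq w < 1 := by rw [← Complex.sq_norm]; nlinarith [norm_nonneg w]
  have hsq : Complex.normSq (w + b) < Complex.normSq (1 + (starRingEnd ℂ) b * w) := by
    simp only [Complex.normSq_apply, Complex.add_re, Complex.add_im, Complex.mul_re,
      Complex.mul_im, Complex.one_re, Complex.one_im, Complex.conj_re, Complex.conj_im]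
    rw [Complex.normSq_apply] at hb2 hw2
    nlinarith [hb2, hw2, mul_pos (sub_pos.2 hb2) (sub_pos.2 hw2)]
  have := Real.sqrt_lt_sqrt (Complex.normSq_nonneg _) hsq
  rwa [← Complex.norm_def, ← Complex.norm_def] at this
  
/-- Schwarz–Pick inequality -/
lemma schwarz_pick {ψ : ℂ → ℂ} (hd : DifferentiableOn ℂ ψ (ball 0 1))
    (hb : ∀ w ∈ ball (0:ℂ) 1, Norm.norm (ψ w) ≤ 1) {z : ℂ} (hz : z ∈ ball (0:ℂ) 1) :
    Norm.norm (deriv ψ z) * (1 - Norm.norm z^2) ≤ 1 - Norm.norm (ψ z)^2 := by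
  have hzlt : Norm.norm z < 1 := by simpa [Complex.dist_eq] using hz
  by_cases hmax : ∃ w₀ ∈ ball (0:ℂ) 1, 1 ≤ Norm.norm (ψ w₀)
  · obtain ⟨w₀, hw₀, hge⟩ := hmax
    have hmaxon : IsMaxOn (norm ∘ ψ) (ball 0 1) w₀ := by
      intro w hw
      simp only [Function.comp_apply]
      exact le_trans (hb w hw) hge
    have heq := Complex.eqOn_of_isPreconnected_of_isMaxOn_norm
      (convex_ball (0:ℂ) 1).isPreconnected isOpen_ball hd hw₀ hmaxon
    have hderiv : deriv ψ z = 0 := by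
      have hev : ψ =ᶠ[nhds z] (Function.const ℂ (ψ w₀)) :=
        Filter.eventuallyEq_of_mem (isOpen_ball.mem_nhds hz) heq
      rw [hev.deriv_eq]
      exact deriv_const z _
    rw [hderiv]
    simp only [norm_zero, zero_mul]
    nlinarith [hb z hz, norm_nonneg (ψ z)]
  · push_neg at hmax
    set a : ℂ := ψ z with ha
    have halt : Norm.norm a < 1 := hmax z hz
    set m1 : ℂ → ℂ := fun ζ => (ζ + z) / (1 + (starRingEnd ℂ) z * ζ) with hm1
    set m2 : ℂ → ℂ := fun w => (w + (-a)) / (1 + (starRingEnd ℂ) (-a) * w) with hm2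
    set φ : ℂ → ℂ := fun ζ => m2 (ψ (m1 ζ)) with hφ
    -- m1 maps ball to ball
    have hm1maps : ∀ ζ ∈ ball (0:ℂ) 1, m1 ζ ∈ ball (0:ℂ) 1 := by
      intro ζ hζ
      have : Norm.norm ζ < 1 := by simpa [Complex.dist_eq] using hζ
      simp only [mem_ball, Complex.dist_eq, sub_zero]
      exact mobius_lt_one hzlt this
    have hφdiff : DifferentiableOn ℂ φ (ball 0 1) := by
      intro ζ hζ
      have hζlt : Norm.norm ζ < 1 := by simpa [Complex.dist_eq] using hζ
      have hden1 : (1 : ℂ) + (starRingEnd ℂ) z * ζ ≠ 0 := mobius_den_ne hzlt hζlt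
      have hd1 : DifferentiableAt ℂ m1 ζ := by
        apply DifferentiableAt.div
        · exact (differentiableAt_id.add_const z)
        · exact (differentiableAt_const _).add ((differentiableAt_const _).mul differentiableAt_id)
        · exact hden1
      have hmem := hm1maps ζ hζ
      have hd2 : DifferentiableAt ℂ ψ (m1 ζ) := hd.differentiableAt (isOpen_ball.mem_nhds hmem)
      have hψlt : Norm.norm (ψ (m1 ζ)) < 1 := hmax _ hmem
      have hden2 : (1 : ℂ) + (starRingEnd ℂ) (-a) * (ψ (m1 ζ)) ≠ 0 :=
        mobius_den_ne (by rwa [norm_neg]) hψlt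
      have hd3 : DifferentiableAt ℂ m2 (ψ (m1 ζ)) := by
        apply DifferentiableAt.div
        · exact (differentiableAt_id.add_const (-a))
        · exact (differentiableAt_const _).add ((differentiableAt_const _).mul differentiableAt_id)
        · exact hden2
      exact ((hd3.comp _ hd2).comp ζ hd1).differentiableWithinAt
    have hφ0 : φ 0 = 0 := by
      have hm10 : m1 0 = z := by simp [hm1]
      simp only [hφ, hm10, hm2, ← ha]
      simp
    have hφmaps : Set.MapsTo φ (ball (0:ℂ) 1) (ball (φ 0) 1) := by
      intro ζ hζ
      rw [hφ0]
      have hmem := hm1maps ζ hζ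
      have hψlt : Norm.norm (ψ (m1 ζ)) < 1 := hmax _ hmem
      simp only [mem_ball, Complex.dist_eq, sub_zero]
      exact mobius_lt_one (by rwa [norm_neg]) hψlt
    have hschwarz := Complex.norm_deriv_le_div_of_mapsTo_ball hφdiff (hφmaps.mono_right ball_subset_closedBall) one_pos
    -- compute deriv φ 0
    have hm10 : m1 0 = z := by simp [hm1]
    have hdm1 : HasDerivAt m1 (1 - (starRingEnd ℂ) z * z) 0 := by
      have h1 : HasDerivAt (fun ζ : ℂ => ζ + z) 1 0 := by
        simpa using (hasDerivAt_id (0:ℂ)).add_const z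
      have h2 : HasDerivAt (fun ζ : ℂ => 1 + (starRingEnd ℂ) z * ζ) ((starRingEnd ℂ) z) 0 := by
        simpa using ((hasDerivAt_id (0:ℂ)).const_mul ((starRingEnd ℂ) z)).const_add 1
      have hden : (1 : ℂ) + (starRingEnd ℂ) z * (0:ℂ) ≠ 0 := by simp
      have := h1.div h2 hden
      simp only [mul_zero, add_zero, zero_add, one_mul, mul_one, div_one] at this
      refine this.congr_deriv ?_
      rw [one_pow, div_one]
      ring
    have hdψ : HasDerivAt ψ (deriv ψ z) z :=
      (hd.differentiableAt (isOpen_ball.mem_nhds hz)).hasDerivAt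
    have hdm2 : HasDerivAt m2 ((1 - (starRingEnd ℂ) a * a)/(1 - (starRingEnd ℂ) a * a)^2) a := by
      have h1 : HasDerivAt (fun w : ℂ => w + (-a)) 1 a := by
        simpa using (hasDerivAt_id a).add_const (-a)
      have h2 : HasDerivAt (fun w : ℂ => 1 + (starRingEnd ℂ) (-a) * w) ((starRingEnd ℂ) (-a)) a := by
        simpa using ((hasDerivAt_id a).const_mul ((starRingEnd ℂ) (-a))).const_add 1
      have hden : (1 : ℂ) + (starRingEnd ℂ) (-a) * a ≠ 0 := by
        apply mobius_den_ne _ halt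
        simpa using halt
      have := h1.div h2 hden
      refine this.congr_deriv ?_
      rw [map_neg]
      ring
    have hcomp : HasDerivAt φ
        (((1 - (starRingEnd ℂ) a * a)/(1 - (starRingEnd ℂ) a * a)^2) *
          (deriv ψ z * (1 - (starRingEnd ℂ) z * z))) 0 := by
      have h1 : HasDerivAt (fun ζ => ψ (m1 ζ)) (deriv ψ z * (1 - (starRingEnd ℂ) z * z)) 0 := by
        have hdψ' : HasDerivAt ψ (deriv ψ z) (m1 0) := by rw [hm10]; exact hdψ
        exact hdψ'.comp 0 hdm1
      have h2 : HasDerivAt m2 ((1 - (starRingEnd ℂ) a * a)/(1 - (starRingEnd ℂ) a * a)^2)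
          (ψ (m1 0)) := by rw [hm10, ← ha]; exact hdm2
      exact h2.comp 0 h1
    have hderivφ : deriv φ 0 = ((1 - (starRingEnd ℂ) a * a)/(1 - (starRingEnd ℂ) a * a)^2) *
        (deriv ψ z * (1 - (starRingEnd ℂ) z * z)) := hcomp.deriv
    rw [hderivφ] at hschwarz
    -- now translate
    have hca : (starRingEnd ℂ) a * a = (Complex.normSq a : ℂ) := by
      rw [mul_comm, Complex.mul_conj]
    have hcz : (starRingEnd ℂ) z * z = (Complex.normSq z : ℂ) := by
      rw [mul_comm, Complex.mul_conj]
    have hna : (0:ℝ) < 1 - Complex.normSq a := by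
      rw [← Complex.sq_norm]; nlinarith [norm_nonneg a]
    have hnz : (0:ℝ) < 1 - Complex.normSq z := by
      rw [← Complex.sq_norm]; nlinarith [norm_nonneg z]
    have habs2 : Norm.norm (1 - (starRingEnd ℂ) a * a) = 1 - Complex.normSq a := by
      rw [hca, show (1 : ℂ) - (Complex.normSq a : ℂ) = ((1 - Complex.normSq a : ℝ) : ℂ) by
        push_cast; ring, Complex.norm_real, Real.norm_eq_abs, _root_.abs_of_pos hna]
    have habs3 : Norm.norm (1 - (starRingEnd ℂ) z * z) = 1 - Complex.normSq z := by
      rw [hcz, show (1 : ℂ) - (Complex.normSq z : ℂ) = ((1 - Complex.normSq z : ℝ) : ℂ) by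
        push_cast; ring, Complex.norm_real, Real.norm_eq_abs, _root_.abs_of_pos hnz]
    rw [norm_mul, norm_mul, norm_div, norm_pow, habs2, habs3] at hschwarz
    have hinv : (1 - Complex.normSq a)/(1 - Complex.normSq a)^2 = (1 - Complex.normSq a)⁻¹ := by
      rw [pow_two, ← div_div, div_self (ne_of_gt hna), one_div]
    rw [hinv] at hschwarz
    have hone : (1:ℝ)/1 = 1 := by norm_num
    rw [hone] at hschwarz
    have hfin : Norm.norm (deriv ψ z) * (1 - Complex.normSq z) ≤ (1 - Complex.normSq a) := by
      have h20 := (inv_mul_le_iff₀ hna).mp hschwarz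
      rw [mul_one] at h20
      exact h20
    rw [← Complex.sq_norm z, ← Complex.sq_norm a] at hfin
    exact hfin

/-- iterated dslope stays differentiable on unit ball -/
lemma dslope_iter_diffOn {F : ℂ → ℂ} (h : DifferentiableOn ℂ F (ball 0 1)) (k : ℕ) :
    DifferentiableOn ℂ ((Function.swap dslope 0)^[k] F) (ball 0 1) := by
  induction k with
  | zero => simpa using h
  | succ m ih =>
    rw [Function.iterate_succ_apply']
    exact (Complex.differentiableOn_dslope
      (isOpen_ball.mem_nhds (mem_ball_self one_pos))).mpr ih

/-- pointwise factorization from vanishing of dslope iterates at 0 -/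
lemma dslope_iter_factor {F : ℂ → ℂ} (m : ℕ)
    (hv : ∀ j, j < m → (Function.swap dslope 0)^[j] F 0 = 0) :
    ∀ w : ℂ, F w = w ^ m * (Function.swap dslope 0)^[m] F w := by
  induction m with
  | zero => intro w; simp
  | succ k ih =>
    intro w
    have h1 := ih (fun j hj => hv j (Nat.lt_succ_of_lt hj)) w
    set G := (Function.swap dslope 0)^[k] F with hG
    have hG0 : G 0 = 0 := hv k (Nat.lt_succ_self k)
    have h2 : G w = w * dslope G 0 w := by
      have := sub_smul_dslope G 0 w
      rw [sub_zero, smul_eq_mul] at this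
      rw [hG0, sub_zero] at this
      exact this.symm
    rw [Function.iterate_succ_apply']
    calc F w = w ^ k * G w := h1
    _ = w ^ k * (w * dslope G 0 w) := by rw [← h2]
    _ = w ^ (k+1) * (Function.swap dslope 0 G) w := by
        rw [Function.swap]
        ring
  
/-- dslope iterate values vanish when iterated derivatives vanish -/
lemma dslope_iter_zero {F : ℂ → ℂ} {q : FormalMultilinearSeries ℂ ℂ ℂ}
    (hq : HasFPowerSeriesAt F q 0) {j : ℕ} (hj : iteratedDeriv j F 0 = 0) :
    (Function.swap dslope 0)^[j] F 0 = 0 := by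
  have hcoeff : q.coeff j = 0 := by
    obtain ⟨R, hR⟩ := hq
    have h1 := hR.factorial_smul (1 : ℂ) j
    rw [← iteratedDeriv_eq_iteratedFDeriv, hj] at h1
    have h2 : q.coeff j = q j (fun _ => 1) := rfl
    rw [h2]
    have h3 : (j.factorial : ℂ) ≠ 0 := by
      exact_mod_cast Nat.factorial_ne_zero j
    have h4 : (j.factorial : ℂ) * q j (fun _ => 1) = 0 := by
      rw [← nsmul_eq_mul]; exact h1
    exact (mul_eq_zero.mp h4).resolve_left h3 
  have h5 := (hq.has_fpower_series_iterate_dslope_fslope j).coeff_zero (fun _ => 1)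
  rw [← h5]
  have h6 : (FormalMultilinearSeries.fslope^[j] q) 0 (fun _ => 1)
      = (FormalMultilinearSeries.fslope^[j] q).coeff 0 := rfl
  rw [h6, FormalMultilinearSeries.coeff_iterate_fslope, zero_add, hcoeff]

/-- 2·∑_{j<n} r^(2j+1) ≤ n(1 + r^(2n)) for 0 ≤ r ≤ 1 -/
lemma sum_odd_pow_le (n : ℕ) {r : ℝ} (h0 : 0 ≤ r) (h1 : r ≤ 1) :
    2 * ∑ j ∈ Finset.range n, r^(2*j+1) ≤ n * (1 + r^(2*n)) := by
  have hrefl : ∑ j ∈ Finset.range n, r^(2*(n-1-j)+1) = ∑ j ∈ Finset.range n, r^(2*j+1) :=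
    Finset.sum_range_reflect (fun j => r^(2*j+1)) n
  have hterm : ∀ j ∈ Finset.range n, r^(2*j+1) + r^(2*(n-1-j)+1) ≤ 1 + r^(2*n) := by
    intro j hj
    rw [Finset.mem_range] at hj
    have hexp : (2*j+1) + (2*(n-1-j)+1) = 2*n := by omega
    have hA : r^(2*j+1) ≤ 1 := pow_le_one₀ h0 h1
    have hB : r^(2*(n-1-j)+1) ≤ 1 := pow_le_one₀ h0 h1
    have hAB : r^(2*j+1) * r^(2*(n-1-j)+1) = r^(2*n) := by
      rw [← pow_add, hexp]
    nlinarith [mul_nonneg (pow_nonneg h0 (2*j+1)) (pow_nonneg h0 (2*(n-1-j)+1)),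
      pow_nonneg h0 (2*j+1), pow_nonneg h0 (2*(n-1-j)+1)]
  calc 2 * ∑ j ∈ Finset.range n, r^(2*j+1)
      = ∑ j ∈ Finset.range n, r^(2*j+1) + ∑ j ∈ Finset.range n, r^(2*(n-1-j)+1) := by
        rw [hrefl]; ring
    _ = ∑ j ∈ Finset.range n, (r^(2*j+1) + r^(2*(n-1-j)+1)) := by
        rw [← Finset.sum_add_distrib]
    _ ≤ ∑ j ∈ Finset.range n, (1 + r^(2*n)) := Finset.sum_le_sum hterm
    _ = n * (1 + r^(2*n)) := by
        rw [Finset.sum_const, Finset.card_range, nsmul_eq_mul]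

lemma geom_identity (n : ℕ) (r : ℝ) :
    1 - r^(2*n) = (1 - r^2) * ∑ j ∈ Finset.range n, (r^2)^j := by
  have := geom_sum_mul (r^2) n
  have h2 : (r^2)^n = r^(2*n) := by rw [← pow_mul, mul_comm]
  nlinarith [this, h2]

lemma E0_nonneg (n : ℕ) {r : ℝ} (h0 : 0 ≤ r) (h1 : r ≤ 1) :
    0 ≤ n * (1 - r^2) - r * (1 - r^(2*n)) := by
  rw [geom_identity n r]
  have hsum : r * ∑ j ∈ Finset.range n, (r^2)^j ≤ n := by
    calc r * ∑ j ∈ Finset.range n, (r^2)^j = ∑ j ∈ Finset.range n, r * (r^2)^j := by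
          rw [Finset.mul_sum]
    _ ≤ ∑ j ∈ Finset.range n, 1 := by
        apply Finset.sum_le_sum
        intro j _
        have : r * (r^2)^j = r^(2*j+1) := by rw [← pow_mul, ← pow_succ']
        rw [this]
        exact pow_le_one₀ h0 h1
    _ = n := by simp
  have hr2 : 0 ≤ 1 - r^2 := by nlinarith
  nlinarith [hsum, hr2]

lemma E1_nonneg (n : ℕ) {r : ℝ} (h0 : 0 ≤ r) (h1 : r ≤ 1) :
    0 ≤ n * (1 - r^2) * (1 + r^(2*n)) - 2 * r * (1 - r^(2*n)) := by
  have hkey := sum_odd_pow_le n h0 h1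
  have hgeom := geom_identity n r
  have hr2 : 0 ≤ 1 - r^2 := by nlinarith
  have hsum2 : 2 * r * (1 - r^(2*n)) = (1 - r^2) * (2 * ∑ j ∈ Finset.range n, r^(2*j+1)) := by
    rw [hgeom]
    have : ∑ j ∈ Finset.range n, r^(2*j+1) = r * ∑ j ∈ Finset.range n, (r^2)^j := by
      rw [Finset.mul_sum]
      apply Finset.sum_congr rfl
      intro j _
      rw [← pow_mul, ← pow_succ']
    rw [this]; ring
  rw [hsum2]
  have := mul_le_mul_of_nonneg_left hkey hr2
  nlinarith [this]

/-- the main real optimization inequality -/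
lemma opt_poly (n : ℕ) {r a : ℝ} (h0 : 0 ≤ r) (h1 : r ≤ 1) (ha0 : 0 ≤ a) (ha1 : a ≤ 1) :
    (n*a*(1-r^2) + r*(1-a^2))*(1-r^(2*n)) ≤ n*(1-r^(2*n)*a^2)*(1-r^2) := by
  have h2 := E0_nonneg n h0 h1
  have h3 := E1_nonneg n h0 h1
  nlinarith [mul_nonneg (sq_nonneg (1-a)) h2, mul_nonneg (mul_nonneg ha0 (by linarith : 0 ≤ 1 - a)) h3]

/-- radius algebra: t < T implies 2nt/(1-t²) < (E-1)/(E+1) -/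
lemma radius_ineq (n : ℕ) (hn : 1 ≤ n) {t : ℝ} (ht0 : 0 ≤ t)
    (ht : t < (Real.exp 1 - 1) /
      (Real.sqrt ((n:ℝ)^2 * (Real.exp 1 + 1)^2 + (Real.exp 1 - 1)^2) + n * (Real.exp 1 + 1))) :
    t < 1 ∧ 2*n*t/(1-t^2) < (Real.exp 1 - 1)/(Real.exp 1 + 1) := by
  set E := Real.exp 1 with hE
  have hE1 : 1 < E := by rw [hE]; nlinarith [Real.exp_one_gt_d9]
  set S : ℝ := Real.sqrt ((n:ℝ)^2 * (E + 1)^2 + (E - 1)^2) with hS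
  have hSpos : 0 < S := Real.sqrt_pos.mpr (by positivity)
  have hS2 : S^2 = (n:ℝ)^2 * (E + 1)^2 + (E - 1)^2 := Real.sq_sqrt (by positivity)
  have hn1 : (1:ℝ) ≤ n := by exact_mod_cast hn
  set D : ℝ := S + n * (E + 1) with hD
  have hDpos : 0 < D := by positivity
  have htD : t * D < E - 1 := by
    rw [← lt_div_iff₀ hDpos]; exact ht
  have hD2 : D^2 = 2*n*(E+1)*D + (E-1)^2 := by
    rw [hD]; nlinarith [hS2]
  have ht1 : t < 1 := by
    have hDbig : E - 1 < D := by
      nlinarith [hSpos, hn1, hE1]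
    nlinarith [htD, hDpos]
  constructor
  · exact ht1
  · have h1t2 : 0 < 1 - t^2 := by nlinarith
    rw [div_lt_div_iff₀ h1t2 (by linarith : (0:ℝ) < E + 1)]
    -- goal: 2nt(E+1) < (E-1)(1-t²)
    nlinarith [mul_pos (show (0:ℝ) < E - 1 - t*D by linarith) 
        (show (0:ℝ) < D^2 + (E-1)*(t*D) by nlinarith [mul_nonneg ht0 hDpos.le]),
      sq_nonneg D, hD2, mul_nonneg ht0 hDpos.le]

/-- maximum modulus bound for ψ -/
lemma psi_bound {n : ℕ} {ψ ω : ℂ → ℂ} (hψd : DifferentiableOn ℂ ψ (ball 0 1))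
    (hωψ : ∀ w ∈ ball (0:ℂ) 1, ω w = w^n * ψ w)
    (hωlt : ∀ w ∈ ball (0:ℂ) 1, Norm.norm (ω w) < 1) :
    ∀ w ∈ ball (0:ℂ) 1, Norm.norm (ψ w) ≤ 1 := by
  intro w hw
  have hwlt : Norm.norm w < 1 := by simpa [Complex.dist_eq] using hw
  have hstep : ∀ s : ℝ, Norm.norm w < s → s < 1 → Norm.norm (ψ w) * s^n ≤ 1 := by
    intro s hs1 hs2
    have hs0 : 0 < s := lt_of_le_of_lt (norm_nonneg w) hs1
    have hdc : DiffContOnCl ℂ ψ (ball 0 s) := by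
      refine ⟨hψd.mono (ball_subset_ball hs2.le), ?_⟩
      rw [closure_ball (0:ℂ) (ne_of_gt hs0)]
      exact hψd.continuousOn.mono (closedBall_subset_ball hs2)
    have hfr : ∀ ζ ∈ frontier (ball (0:ℂ) s), ‖ψ ζ‖ ≤ 1/s^n := by
      intro ζ hζ
      rw [frontier_ball (0:ℂ) (ne_of_gt hs0)] at hζ
      have hζs : Norm.norm ζ = s := by
        simpa [Complex.dist_eq] using hζ
      have hζball : ζ ∈ ball (0:ℂ) 1 := by
        simp only [mem_ball, Complex.dist_eq, sub_zero]
        rw [hζs]; exact hs2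
      have h1 := hωψ ζ hζball
      have h2 := hωlt ζ hζball
      rw [h1, norm_mul, norm_pow, hζs] at h2
      rw [le_div_iff₀ (by positivity)]
      exact (mul_comm (s^n) (Norm.norm (ψ ζ)) ▸ h2.le)
    have hcl : w ∈ closure (ball (0:ℂ) s) :=
      subset_closure (by simpa [Complex.dist_eq] using hs1)
    have := Complex.norm_le_of_forall_mem_frontier_norm_le isBounded_ball hdc hfr hcl
    rw [le_div_iff₀ (by positivity)] at this
    exact this
  have htend : Filter.Tendsto (fun s : ℝ => Norm.norm (ψ w) * s^n)
      (nhdsWithin 1 (Set.Iio 1)) (nhds (Norm.norm (ψ w))) := by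
    have hc : Filter.Tendsto (fun s : ℝ => Norm.norm (ψ w) * s^n) (nhds 1)
        (nhds (Norm.norm (ψ w) * 1^n)) :=
      ((continuous_const.mul (continuous_pow n)).tendsto 1)
    rw [one_pow, mul_one] at hc
    exact hc.mono_left nhdsWithin_le_nhds
  have hev : ∀ᶠ s in nhdsWithin 1 (Set.Iio 1), Norm.norm (ψ w) * s^n ≤ 1 := by
    filter_upwards [Ioo_mem_nhdsLT_of_mem (show (1:ℝ) ∈ Set.Ioc (Norm.norm w) 1 from
      ⟨hwlt, le_refl 1⟩)] with s hs
    exact hstep s hs.1 hs.2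
  exact le_of_tendsto htend hev

set_option maxHeartbeats 1600000 in
theorem stmt_18 (n : ℕ) (hn : 1 ≤ n) (p : ℂ → ℂ)
    (hp : CaraPn n 0 p)
    (f : ℂ → ℂ) (hf : ∀ z, f z = z * p z) :
    ∀ z ∈ ball (0 : ℂ) 1, 0 < ‖z‖ →
      ‖z‖ <
        ((Real.exp 1 - 1) /
          (Real.sqrt (n ^ 2 * (Real.exp 1 + 1) ^ 2 + (Real.exp 1 - 1) ^ 2) +
            n * (Real.exp 1 + 1)))
          ^ ((1 : ℝ) / n) →
      z * deriv f z / f z ∈ DeltaSG := by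
  obtain ⟨hpd, hp0, hpk, hppos⟩ := hp
  intro z hzball hz0 hzR
  obtain ⟨m, rfl⟩ : ∃ m, n = m + 1 := ⟨n - 1, (Nat.succ_pred_eq_of_pos hn).symm⟩
  set n := m + 1
  set E := Real.exp 1 with hE
  have hE1 : 1 < E := by rw [hE]; nlinarith [Real.exp_one_gt_d9]
  set r : ℝ := Norm.norm z with hr
  have hr0 : 0 < r := hz0
  -- step 1 : r^n < T and consequences
  set T : ℝ := (E - 1) / (Real.sqrt ((n:ℝ)^2 * (E + 1)^2 + (E - 1)^2) + n * (E + 1)) with hT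
  have hTpos : 0 < T := by
    rw [hT]
    apply div_pos (by linarith)
    have : (0:ℝ) < Real.sqrt ((n:ℝ)^2 * (E+1)^2 + (E-1)^2) := Real.sqrt_pos.mpr (by positivity)
    positivity
  have htn : r^n < T := by
    have h1 : r ^ ((n:ℕ):ℝ) < (T ^ ((1:ℝ)/n)) ^ ((n:ℕ):ℝ) :=
      Real.rpow_lt_rpow (norm_nonneg z) hzR (by positivity)
    have h2 : (T ^ ((1:ℝ)/n)) ^ ((n:ℕ):ℝ) = T := by
      rw [← Real.rpow_mul hTpos.le, one_div,
        inv_mul_cancel₀ (by positivity : ((n:ℕ):ℝ) ≠ 0), Real.rpow_one]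
    rw [h2] at h1
    rw [← Real.rpow_natCast r n]
    exact h1
  obtain ⟨htn1, hmain⟩ := radius_ineq n hn (by positivity) htn
  have hr1 : r < 1 := by simpa [Complex.dist_eq, hr] using hzball
  -- basic nonvanishing
  have hppos' : ∀ w ∈ ball (0:ℂ) 1, 0 < (p w).re := fun w hw => hppos w hw
  have hpne : ∀ w ∈ ball (0:ℂ) 1, p w ≠ 0 := by
    intro w hw h
    have := hppos' w hw
    rw [h] at this; simp at this
  have hp1ne : ∀ w ∈ ball (0:ℂ) 1, p w + 1 ≠ 0 := by
    intro w hw h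
    have h2 : (p w + 1).re = (p w).re + 1 := by simp
    rw [h] at h2
    simp at h2
    have := hppos' w hw
    linarith
  -- omega function
  set ω : ℂ → ℂ := fun w => (p w - 1) / (p w + 1) with hω
  have hωlt : ∀ w ∈ ball (0:ℂ) 1, Norm.norm (ω w) < 1 := by
    intro w hw
    rw [hω]
    simp only
    rw [norm_div, div_lt_one (norm_pos_iff.mpr (hp1ne w hw))]
    have hsq : Complex.normSq (p w - 1) < Complex.normSq (p w + 1) := by
      simp only [Complex.normSq_apply, Complex.sub_re, Complex.sub_im, Complex.add_re,
        Complex.add_im, Complex.one_re, Complex.one_im]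
      nlinarith [hppos' w hw]
    have := Real.sqrt_lt_sqrt (Complex.normSq_nonneg _) hsq
    rwa [← Complex.norm_def, ← Complex.norm_def] at this
  -- factorization
  set h1f : ℂ → ℂ := fun w => p w - 1 with hh1
  have hhd : DifferentiableOn ℂ h1f (ball 0 1) := hpd.sub_const 1
  have hA : AnalyticAt ℂ h1f 0 := hhd.analyticAt (isOpen_ball.mem_nhds (mem_ball_self one_pos))
  obtain ⟨q, hq⟩ := hA
  have hvanish : ∀ j, j < n → (Function.swap dslope 0)^[j] h1f 0 = 0 := by
    intro j hj
    apply dslope_iter_zero hq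
    match j with
    | 0 =>
      rw [iteratedDeriv_zero, hh1]
      simp [hp0]
    | (k+1) =>
      have hd1 : deriv h1f = deriv p := by
        funext w
        rw [hh1]
        exact deriv_sub_const 1
      rw [iteratedDeriv_succ', hd1, ← iteratedDeriv_succ']
      exact hpk (k+1) (Nat.le_add_left 1 k) (by omega)
  set g : ℂ → ℂ := (Function.swap dslope 0)^[n] h1f with hg
  have hgd : DifferentiableOn ℂ g (ball 0 1) := dslope_iter_diffOn hhd n
  have hfac : ∀ w : ℂ, h1f w = w^n * g w := dslope_iter_factor n hvanish
  set ψ : ℂ → ℂ := fun w => g w / (p w + 1) with hψ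
  have hψd : DifferentiableOn ℂ ψ (ball 0 1) := hgd.div (hpd.add_const 1) hp1ne
  have hωψ : ∀ w ∈ ball (0:ℂ) 1, ω w = w^n * ψ w := by
    intro w hw
    rw [hω, hψ]
    simp only
    rw [show p w - 1 = h1f w from rfl, hfac w, mul_div_assoc]
  have hψle : ∀ w ∈ ball (0:ℂ) 1, Norm.norm (ψ w) ≤ 1 := psi_bound hψd hωψ hωlt
  -- Schwarz-Pick at z
  set a : ℝ := Norm.norm (ψ z) with ha
  have ha0 : 0 ≤ a := norm_nonneg _
  have ha1 : a ≤ 1 := hψle z hzball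
  have hSP : Norm.norm (deriv ψ z) * (1 - r^2) ≤ 1 - a^2 :=
    schwarz_pick hψd hψle hzball
  -- derivative identities
  have hdp : HasDerivAt p (deriv p z) z :=
    (hpd.differentiableAt (isOpen_ball.mem_nhds hzball)).hasDerivAt
  have hψz : HasDerivAt ψ (deriv ψ z) z :=
    (hψd.differentiableAt (isOpen_ball.mem_nhds hzball)).hasDerivAt
  set P : ℂ := p z with hP
  set Dp : ℂ := deriv p z with hDp
  have hPne : P ≠ 0 := hpne z hzball
  have hP1ne : P + 1 ≠ 0 := hp1ne z hzball
  have hω1 : HasDerivAt ω ((Dp * (P + 1) - (P - 1) * Dp) / (P + 1)^2) z :=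
    (hdp.sub_const 1).div (hdp.add_const 1) hP1ne
  have hω2 : HasDerivAt (fun w => w^n * ψ w)
      ((n:ℂ) * z^(n-1) * ψ z + z^n * deriv ψ z) z :=
    (hasDerivAt_pow n z).mul hψz
  set W : ℂ := (n:ℂ) * z^(n-1) * ψ z + z^n * deriv ψ z with hW
  have hDD : (Dp * (P + 1) - (P - 1) * Dp) / (P + 1)^2 = W := by
    have hEqOn : Set.EqOn ω (fun w => w^n * ψ w) (ball 0 1) := fun w hw => hωψ w hw
    have hev : ω =ᶠ[nhds z] (fun w => w^n * ψ w) :=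
      Filter.eventuallyEq_of_mem (isOpen_ball.mem_nhds hzball) hEqOn
    have h3 : deriv ω z = deriv (fun w => w^n * ψ w) z := hev.deriv_eq
    rw [← hω1.deriv, ← hω2.deriv]
    exact h3
  have hW2 : (2:ℂ) * Dp / (P + 1)^2 = W := by
    rw [← hDD]; ring_nf
  -- u and its bound
  set u : ℂ := z * Dp / P with hu
  have hωz2 : 1 - (ω z)^2 = 4 * P / (P + 1)^2 := by
    rw [hω]
    simp only
    rw [← hP]
    field_simp
    ring
  have hu_eq : u = 2 * z * W / (1 - (ω z)^2) := by
    rw [hωz2, ← hW2, hu]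
    field_simp
    ring
  -- abs bounds
  have hq1 : (0:ℝ) < 1 - r^2 := by nlinarith
  have hrn1 : r^n < 1 := pow_lt_one₀ hr0.le hr1 (by omega)
  have habsωz : Norm.norm (ω z) = r^n * a := by
    rw [hωψ z hzball, norm_mul, norm_pow, ← hr, ← ha]
  have hM0 : (0:ℝ) < 1 - (r^n * a)^2 := by
    have hh1 : 0 ≤ r^n * a := mul_nonneg (pow_nonneg hr0.le n) ha0
    have hh2 : r^n * a < 1 :=
      lt_of_le_of_lt (mul_le_of_le_one_right (pow_nonneg hr0.le n) ha1) hrn1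
    nlinarith [hh1, hh2]
  have hMden : 1 - (r^n * a)^2 ≤ Norm.norm (1 - (ω z)^2) := by
    have htri : Norm.norm (1:ℂ) ≤ Norm.norm (1 - (ω z)^2) + Norm.norm ((ω z)^2) := by
      calc Norm.norm (1:ℂ) = Norm.norm ((1 - (ω z)^2) + (ω z)^2) := by ring_nf
      _ ≤ _ := norm_add_le _ _
    rw [norm_one] at htri
    rw [norm_pow, habsωz] at htri
    linarith
  have hderivψ : Norm.norm (deriv ψ z) ≤ (1 - a^2)/(1 - r^2) := by
    rw [le_div_iff₀ hq1]
    exact hSP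
  set B : ℝ := n * r^(n-1) * a + r^n * ((1 - a^2)/(1 - r^2)) with hB
  have hWle : Norm.norm W ≤ B := by
    rw [hW, hB]
    calc Norm.norm ((n:ℂ) * z^(n-1) * ψ z + z^n * deriv ψ z)
        ≤ Norm.norm ((n:ℂ) * z^(n-1) * ψ z) + Norm.norm (z^n * deriv ψ z) :=
          norm_add_le _ _
      _ = n * r^(n-1) * a + r^n * Norm.norm (deriv ψ z) := by
          rw [norm_mul, norm_mul, norm_mul, norm_pow, norm_pow]
          simp [← hr, ← ha, Complex.norm_natCast]
      _ ≤ n * r^(n-1) * a + r^n * ((1 - a^2)/(1 - r^2)) := by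
          have := mul_le_mul_of_nonneg_left hderivψ (pow_nonneg hr0.le n)
          linarith
  have hB0 : 0 ≤ B := by
    rw [hB]
    have : 0 ≤ (1 - a^2)/(1-r^2) := div_nonneg (by nlinarith) hq1.le
    positivity
  have habsu : Norm.norm u ≤ 2 * r * B / (1 - (r^n * a)^2) := by
    rw [hu_eq, norm_div, norm_mul, norm_mul]
    simp only [Complex.norm_two, ← hr]
    apply div_le_div₀ (by positivity) _ hM0 hMden
    exact mul_le_mul_of_nonneg_left hWle (by positivity)
  -- apply opt_poly
  have hopt := opt_poly n hr0.le hr1.le ha0 ha1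
  have hq2 : (0:ℝ) < 1 - r^(2*n) := by
    have : r^(2*n) < 1 := pow_lt_one₀ hr0.le hr1 (by omega)
    linarith
  have hstep2 : 2 * r * B / (1 - (r^n * a)^2) ≤ 2*n*r^n/(1 - r^(2*n)) := by
    have hMq : 1 - (r^n * a)^2 = 1 - r^(2*n)*a^2 := by
      rw [mul_pow, ← pow_mul, mul_comm n 2]
    rw [hMq, div_le_div_iff₀ (by rw [← hMq]; exact hM0) hq2]
    have hBmul : B * (1 - r^2) = n * r^(n-1) * a * (1-r^2) + r^n * (1-a^2) := by
      rw [hB]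
      field_simp
    have e1 : (2*r*B*(1 - r^(2*n)))*(1-r^2)
        = 2*r^n * ((n*a*(1-r^2)+r*(1-a^2))*(1-r^(2*n))) := by
      have h5 : 2*r*B*(1 - r^(2*n))*(1-r^2) = 2*r*(1-r^(2*n)) * (B * (1-r^2)) := by ring
      rw [h5, hBmul, show n-1 = m from rfl, show n = m+1 from rfl]
      push_cast
      ring
    have e2 : (2*(n:ℝ)*r^n*(1 - r^(2*n)*a^2))*(1-r^2)
        = 2*r^n * ((n:ℝ)*(1-r^(2*n)*a^2)*(1-r^2)) := by ring
    have hprod := mul_le_mul_of_nonneg_left hopt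
      (show (0:ℝ) ≤ 2*r^n by positivity)
    have final : (2*r*B*(1 - r^(2*n)))*(1-r^2) ≤ (2*(n:ℝ)*r^n*(1 - r^(2*n)*a^2))*(1-r^2) := by
      rw [e1, e2]
      calc 2*r^n * ((n*a*(1-r^2)+r*(1-a^2))*(1-r^(2*n)))
          ≤ 2*r^n * ((n:ℝ)*(1-r^(2*n)*a^2)*(1-r^2)) := hprod
        _ = 2*r^n * ((n:ℝ)*(1-r^(2*n)*a^2)*(1-r^2)) := rfl
    exact le_of_mul_le_mul_right final hq1
  have hu_rho : Norm.norm u < (E - 1)/(E + 1) := by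
    have h2n : r^(2*n) = (r^n)^2 := by rw [← pow_mul, mul_comm]
    calc Norm.norm u ≤ 2 * r * B / (1 - (r^n * a)^2) := habsu
      _ ≤ 2*n*r^n/(1 - r^(2*n)) := hstep2
      _ = 2*n*(r^n)/(1 - (r^n)^2) := by rw [h2n]
      _ < (E - 1)/(E + 1) := hmain
  -- final assembly
  have hfun : f = fun w => w * p w := funext hf
  have hfder : HasDerivAt f (1 * P + z * Dp) z := by
    rw [hfun]
    exact (hasDerivAt_id z).mul hdp
  have hzne : z ≠ 0 := by
    intro h
    have hr00 : r = 0 := by rw [hr, h]; simp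
    linarith
  have hform : z * deriv f z / f z = 1 + u := by
    rw [hfder.deriv, hf z, hu, ← hP]
    field_simp
  rw [hform]
  exact mem_deltaSG u hu_rho
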